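/- arXiv:1812.01042 — 3 statements merged into one kernel-verified Lean document; each statement's English description precedes it below -/
import Mathlib

section
/- Let 0 → J →π C →ρ D → 0 be an exact sequence of C*-algebras, and suppose we have a commutative diagram with top row I →φ A →ψ B, vertical *-homomorphisms η: I → J, ζ: A → C, ω: B → D which are injective and nondegenerate (i.e., η(I)J is dense in J, ζ(A)C is dense in C, ω(B)D is dense in D), such that φ(I) is a closed two-sided ideal of A and ψ is surjective. Then the top row 0 → I →φ A →ψ B → 0 is exact. -/
/-! Injectivity of `φ` and `ψ ∘ φ = 0` are diagram chases. For the converse, if `ψ a = 0` then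
`ζ a = π j` for some `j`. Nondegeneracy of `η` means that `η` carries an approximate unit `(e)` of
`I` to a left approximate unit for `J`, so `ζ (φ e * a) = π (η e * j) → π j = ζ a`. Since `ζ` is
isometric, `φ e * a → a`, and `a` lies in the closed ideal `φ(I)`. -/

open Filter Topology
open scoped CStarAlgebra

section MulLeft

variable {𝕜 ι J : Type*} [NonUnitalSeminormedRing J] {l : Filter ι} {u : ι → J}

lemma isClosed_setOf_tendsto_mul_left (hu : ∀ᶠ i in l, ‖u i‖ ≤ 1) :
    IsClosed {x : J | Tendsto (fun i ↦ u i * x) l (𝓝 x)} := by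
  refine isClosed_of_closure_subset fun x hx ↦ Metric.tendsto_nhds.mpr fun ε hε ↦ ?_
  obtain ⟨y, hy, hxy⟩ := Metric.mem_closure_iff.mp hx (ε / 3) (by positivity)
  filter_upwards [hu, Metric.tendsto_nhds.mp hy (ε / 3) (by positivity)] with i hui hyi
  rw [dist_eq_norm] at hxy hyi ⊢
  have hux : ‖u i * x - u i * y‖ ≤ ‖x - y‖ := by
    rw [← mul_sub]
    exact (norm_mul_le _ _).trans (mul_le_of_le_one_left (norm_nonneg _) hui)
  calc ‖u i * x - x‖ = ‖(u i * x - u i * y) + (u i * y - y) + (y - x)‖ := by abel_nf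
    _ ≤ ‖u i * x - u i * y‖ + ‖u i * y - y‖ + ‖y - x‖ := norm_add₃_le
    _ < ε / 3 + ε / 3 + ε / 3 := by
      rw [norm_sub_rev y x]
      gcongr
      exact hux.trans_lt hxy
    _ = ε := by ring

variable [NormedField 𝕜] [NormedSpace 𝕜 J] [SMulCommClass 𝕜 J J]

variable (𝕜 l u) in
def tendstoMulLeftSubmodule : Submodule 𝕜 J where
  carrier := {x | Tendsto (fun i ↦ u i * x) l (𝓝 x)}
  zero_mem' := by simpa using tendsto_const_nhds
  add_mem' {x y} hx hy := by simpa only [Set.mem_ofPred_eq, mul_add] using hx.add hy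
  smul_mem' c x hx := by simpa only [Set.mem_ofPred_eq, mul_smul_comm] using hx.const_smul c

lemma tendsto_mul_left_of_mem_closure_span {s : Set J} (hu : ∀ᶠ i in l, ‖u i‖ ≤ 1)
    (hs : ∀ x ∈ s, Tendsto (fun i ↦ u i * x) l (𝓝 x)) {x : J}
    (hx : x ∈ closure (Submodule.span 𝕜 s : Set J)) :
    Tendsto (fun i ↦ u i * x) l (𝓝 x) :=
  closure_minimal (Submodule.span_le (p := tendstoMulLeftSubmodule 𝕜 l u).mpr hs)
    (isClosed_setOf_tendsto_mul_left hu) hx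

end MulLeft

lemma NonUnitalStarAlgHom.tendsto_mul_left_of_nondegenerate {I J : Type*}
    [NonUnitalCStarAlgebra I] [PartialOrder I] [StarOrderedRing I] [NonUnitalCStarAlgebra J]
    {l : Filter I} (hl : l.IsIncreasingApproximateUnit) (η : I →⋆ₙₐ[ℂ] J)
    (hη : closure (Submodule.span ℂ {y : J | ∃ x : I, ∃ j : J, y = η x * j} : Set J) = Set.univ)
    (j : J) : Tendsto (fun e ↦ η e * j) l (𝓝 j) := by
  refine tendsto_mul_left_of_mem_closure_span ?_ ?_ (hη ▸ Set.mem_univ j)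
  · filter_upwards [hl.eventually_norm] with e he
    exact (NonUnitalStarAlgHom.norm_apply_le η e).trans he
  · rintro _ ⟨x, k, rfl⟩
    have hηx : Tendsto (fun e ↦ η (e * x)) l (𝓝 (η x)) :=
      ((map_continuous η).tendsto x).comp (hl.tendsto_mul_right x)
    simpa only [map_mul, mul_assoc] using hηx.mul_const k

theorem stmt0_general
    {I A B J C D : Type*}
    [NonUnitalNormedRing I] [StarRing I] [CStarRing I] [NormedSpace ℂ I]
    [IsScalarTower ℂ I I] [SMulCommClass ℂ I I] [StarModule ℂ I] [CompleteSpace I]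
    [NonUnitalNormedRing A] [StarRing A] [CStarRing A] [NormedSpace ℂ A]
    [IsScalarTower ℂ A A] [SMulCommClass ℂ A A] [StarModule ℂ A] [CompleteSpace A]
    [NonUnitalNormedRing B] [StarRing B] [NormedSpace ℂ B]
    [NonUnitalNormedRing J] [StarRing J] [CStarRing J] [NormedSpace ℂ J]
    [IsScalarTower ℂ J J] [SMulCommClass ℂ J J] [StarModule ℂ J] [CompleteSpace J]
    [NonUnitalNormedRing C] [StarRing C] [CStarRing C] [NormedSpace ℂ C]
    [IsScalarTower ℂ C C] [SMulCommClass ℂ C C] [StarModule ℂ C] [CompleteSpace C]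
    [NonUnitalNormedRing D] [StarRing D] [NormedSpace ℂ D]
    (φ : I →⋆ₙₐ[ℂ] A) (ψ : A →⋆ₙₐ[ℂ] B)
    (π : J →⋆ₙₐ[ℂ] C) (ρ : C →⋆ₙₐ[ℂ] D)
    (η : I →⋆ₙₐ[ℂ] J) (ζ : A →⋆ₙₐ[ℂ] C) (ω : B →⋆ₙₐ[ℂ] D)
    -- the bottom row is exact
    (hπ_inj : Function.Injective π)
    (hbotexact : ∀ c : C, ρ c = 0 ↔ c ∈ Set.range π)
    -- the diagram commutes
    (hcomm₁ : ∀ x : I, ζ (φ x) = π (η x))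
    (hcomm₂ : ∀ a : A, ω (ψ a) = ρ (ζ a))
    -- the vertical maps are injective
    (hη_inj : Function.Injective η) (hζ_inj : Function.Injective ζ)
    (hω_inj : Function.Injective ω)
    -- the vertical maps are nondegenerate
    (hη_nd : closure (Submodule.span ℂ {y : J | ∃ x : I, ∃ j : J, y = η x * j} : Set J)
      = Set.univ)
    -- φ(I) is a closed two-sided ideal of A
    (hclosed : IsClosed (Set.range φ))
    (hideal : ∀ a ∈ Set.range φ, ∀ x : A, a * x ∈ Set.range φ ∧ x * a ∈ Set.range φ)
    -- ψ is surjective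
    (hψ_surj : Function.Surjective ψ) :
    Function.Injective φ ∧ Function.Surjective ψ ∧
      (∀ a : A, ψ a = 0 ↔ a ∈ Set.range φ) := by
  let : NonUnitalCStarAlgebra I := {}
  let : NonUnitalCStarAlgebra A := {}
  let : NonUnitalCStarAlgebra J := {}
  let : NonUnitalCStarAlgebra C := {}
  let := CStarAlgebra.spectralOrder I
  have := CStarAlgebra.spectralOrderedRing I
  refine ⟨fun x y h ↦ hη_inj <| hπ_inj <| by rw [← hcomm₁, ← hcomm₁, h], hψ_surj,
    fun a ↦ ⟨fun ha ↦ ?_, ?_⟩⟩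
  · obtain ⟨j, hj⟩ := (hbotexact (ζ a)).mp (by rw [← hcomm₂, ha, map_zero])
    have hζ : Tendsto (fun e ↦ ζ (φ e * a)) (CStarAlgebra.approximateUnit I) (𝓝 (ζ a)) := by
      simp_rw [map_mul, hcomm₁, ← hj, ← map_mul]
      exact ((map_continuous π).tendsto j).comp <|
        η.tendsto_mul_left_of_nondegenerate (CStarAlgebra.increasingApproximateUnit I) hη_nd j
    exact hclosed.mem_of_tendsto
      ((NonUnitalStarAlgHom.isometry ζ hζ_inj).isEmbedding.tendsto_nhds_iff.mpr hζ)
      (Eventually.of_forall fun e ↦ (hideal _ ⟨e, rfl⟩ a).1)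
  · rintro ⟨x, rfl⟩
    apply hω_inj
    rw [hcomm₂, hcomm₁, map_zero, hbotexact]
    exact ⟨η x, rfl⟩

/-- Abstract exactness lemma: given a commutative diagram of C*-algebras with exact
bottom row, injective nondegenerate vertical maps, `φ(I)` an ideal of `A`, and `ψ`
surjective, the top row `0 → I → A → B → 0` is exact. -/
theorem stmt0
    {I A B J C D : Type*}
    [NonUnitalNormedRing I] [StarRing I] [CStarRing I] [NormedSpace ℂ I]
    [IsScalarTower ℂ I I] [SMulCommClass ℂ I I] [StarModule ℂ I] [CompleteSpace I]
    [NonUnitalNormedRing A] [StarRing A] [CStarRing A] [NormedSpace ℂ A]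
    [IsScalarTower ℂ A A] [SMulCommClass ℂ A A] [StarModule ℂ A] [CompleteSpace A]
    [NonUnitalNormedRing B] [StarRing B] [CStarRing B] [NormedSpace ℂ B]
    [IsScalarTower ℂ B B] [SMulCommClass ℂ B B] [StarModule ℂ B] [CompleteSpace B]
    [NonUnitalNormedRing J] [StarRing J] [CStarRing J] [NormedSpace ℂ J]
    [IsScalarTower ℂ J J] [SMulCommClass ℂ J J] [StarModule ℂ J] [CompleteSpace J]
    [NonUnitalNormedRing C] [StarRing C] [CStarRing C] [NormedSpace ℂ C]
    [IsScalarTower ℂ C C] [SMulCommClass ℂ C C] [StarModule ℂ C] [CompleteSpace C]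
    [NonUnitalNormedRing D] [StarRing D] [CStarRing D] [NormedSpace ℂ D]
    [IsScalarTower ℂ D D] [SMulCommClass ℂ D D] [StarModule ℂ D] [CompleteSpace D]
    (φ : I →⋆ₙₐ[ℂ] A) (ψ : A →⋆ₙₐ[ℂ] B)
    (π : J →⋆ₙₐ[ℂ] C) (ρ : C →⋆ₙₐ[ℂ] D)
    (η : I →⋆ₙₐ[ℂ] J) (ζ : A →⋆ₙₐ[ℂ] C) (ω : B →⋆ₙₐ[ℂ] D)
    -- the bottom row is exact
    (hπ_inj : Function.Injective π) (hρ_surj : Function.Surjective ρ)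
    (hbotexact : ∀ c : C, ρ c = 0 ↔ c ∈ Set.range π)
    -- the diagram commutes
    (hcomm₁ : ∀ x : I, ζ (φ x) = π (η x))
    (hcomm₂ : ∀ a : A, ω (ψ a) = ρ (ζ a))
    -- the vertical maps are injective
    (hη_inj : Function.Injective η) (hζ_inj : Function.Injective ζ)
    (hω_inj : Function.Injective ω)
    -- the vertical maps are nondegenerate
    (hη_nd : closure (Submodule.span ℂ {y : J | ∃ x : I, ∃ j : J, y = η x * j} : Set J)
      = Set.univ)
    (hζ_nd : closure (Submodule.span ℂ {y : C | ∃ a : A, ∃ c : C, y = ζ a * c} : Set C)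
      = Set.univ)
    (hω_nd : closure (Submodule.span ℂ {y : D | ∃ b : B, ∃ d : D, y = ω b * d} : Set D)
      = Set.univ)
    -- φ(I) is a closed two-sided ideal of A
    (hclosed : IsClosed (Set.range φ))
    (hideal : ∀ a ∈ Set.range φ, ∀ x : A, a * x ∈ Set.range φ ∧ x * a ∈ Set.range φ)
    -- ψ is surjective
    (hψ_surj : Function.Surjective ψ) :
    Function.Injective φ ∧ Function.Surjective ψ ∧
      (∀ a : A, ψ a = 0 ↔ a ∈ Set.range φ) :=
  stmt0_general φ ψ π ρ η ζ ω hπ_inj hbotexact hcomm₁ hcomm₂ hη_inj hζ_inj hω_inj hη_nd hclosed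
    hideal hψ_surj
end

section
/- Let φ: I → A, ψ: A → B, η: I → J, ζ: A → C, π: J → C, ρ: C → D, ω: B → D be *-homomorphisms of C*-algebras with ζ∘φ = π∘η, ω∘ψ = ρ∘ζ, where ζ is injective, η is injective and nondegenerate, ker ρ = π(J), and φ(I) is a closed two-sided ideal of A. Then ker ψ ⊆ φ(I). -/
open Unitization in
/-- The non-unital spectral order on a non-unital C⋆-algebra, obtained by pulling back the
spectral order on the unitization. -/
noncomputable def nuOrder (E : Type*) [NonUnitalCStarAlgebra E] : PartialOrder E :=
  letI := CStarAlgebra.spectralOrder (Unitization ℂ E)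
  PartialOrder.lift (inr : E → Unitization ℂ E) inr_injective

open Unitization in
lemma nuStarOrdered (E : Type*) [NonUnitalCStarAlgebra E] :
    letI := nuOrder E
    StarOrderedRing E := by
  letI := nuOrder E
  letI := CStarAlgebra.spectralOrder (Unitization ℂ E)
  haveI := CStarAlgebra.spectralOrderedRing (Unitization ℂ E)
  refine StarOrderedRing.of_le_iff fun a b => ?_
  constructor
  · intro hab
    have h : IsSelfAdjoint ((b : Unitization ℂ E) - a) ∧
        SpectrumRestricts ((b : Unitization ℂ E) - a) ContinuousMap.realToNNReal := hab
    have hc : ((b - a : E) : Unitization ℂ E) = (b : Unitization ℂ E) - a := by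
      simp
    have h1 : IsSelfAdjoint (b - a) := by
      have := h.1
      rw [← hc] at this
      apply inr_injective (R := ℂ)
      simpa [← inr_star] using this.star_eq
    have h2 : QuasispectrumRestricts (b - a) ContinuousMap.realToNNReal := by
      rw [QuasispectrumRestricts.nnreal_iff]
      intro x hx
      rw [Unitization.quasispectrum_eq_spectrum_inr' ℝ ℂ (b - a), hc] at hx
      exact SpectrumRestricts.nnreal_iff.mp h.2 x hx
    obtain ⟨x, hx, -, hxx⟩ :=
      CFC.exists_sqrt_of_isSelfAdjoint_of_quasispectrumRestricts h1 h2
    exact ⟨x, by rw [hx.star_eq, hxx]; abel⟩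
  · rintro ⟨s, rfl⟩
    show (a : Unitization ℂ E) ≤ ((a + star s * s : E) : Unitization ℂ E)
    have : ((a + star s * s : E) : Unitization ℂ E)
        = (a : Unitization ℂ E) + star (s : Unitization ℂ E) * s := by simp
    rw [this]
    exact le_add_of_nonneg_right (star_mul_self_nonneg _)

open scoped CStarAlgebra in
/-- The key step of the abstract exactness lemma: with `ζ` injective, `η` injective and
nondegenerate, `ker ρ = π(J)` and `φ(I)` a closed two-sided ideal of `A`,
one has `ker ψ ⊆ φ(I)`. -/
theorem stmt1
    {I A B J C D : Type*}
    [NonUnitalNormedRing I] [StarRing I] [CStarRing I] [NormedSpace ℂ I]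
    [IsScalarTower ℂ I I] [SMulCommClass ℂ I I] [StarModule ℂ I] [CompleteSpace I]
    [NonUnitalNormedRing A] [StarRing A] [CStarRing A] [NormedSpace ℂ A]
    [IsScalarTower ℂ A A] [SMulCommClass ℂ A A] [StarModule ℂ A] [CompleteSpace A]
    [NonUnitalNormedRing B] [StarRing B] [CStarRing B] [NormedSpace ℂ B]
    [IsScalarTower ℂ B B] [SMulCommClass ℂ B B] [StarModule ℂ B] [CompleteSpace B]
    [NonUnitalNormedRing J] [StarRing J] [CStarRing J] [NormedSpace ℂ J]
    [IsScalarTower ℂ J J] [SMulCommClass ℂ J J] [StarModule ℂ J] [CompleteSpace J]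
    [NonUnitalNormedRing C] [StarRing C] [CStarRing C] [NormedSpace ℂ C]
    [IsScalarTower ℂ C C] [SMulCommClass ℂ C C] [StarModule ℂ C] [CompleteSpace C]
    [NonUnitalNormedRing D] [StarRing D] [CStarRing D] [NormedSpace ℂ D]
    [IsScalarTower ℂ D D] [SMulCommClass ℂ D D] [StarModule ℂ D] [CompleteSpace D]
    (φ : I →⋆ₙₐ[ℂ] A) (ψ : A →⋆ₙₐ[ℂ] B)
    (η : I →⋆ₙₐ[ℂ] J) (ζ : A →⋆ₙₐ[ℂ] C)
    (π : J →⋆ₙₐ[ℂ] C) (ρ : C →⋆ₙₐ[ℂ] D) (ω : B →⋆ₙₐ[ℂ] D)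
    (hcomm₁ : ∀ x : I, ζ (φ x) = π (η x))
    (hcomm₂ : ∀ a : A, ω (ψ a) = ρ (ζ a))
    (hζ_inj : Function.Injective ζ)
    (hη_inj : Function.Injective η)
    (hη_nd : closure (Submodule.span ℂ {y : J | ∃ x : I, ∃ j : J, y = η x * j} : Set J)
      = Set.univ)
    (hkerρ : ∀ c : C, ρ c = 0 ↔ c ∈ Set.range π)
    (hclosed : IsClosed (Set.range φ))
    (hideal : ∀ a ∈ Set.range φ, ∀ x : A, a * x ∈ Set.range φ ∧ x * a ∈ Set.range φ) :
    {a : A | ψ a = 0} ⊆ Set.range φ := by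
  letI : NonUnitalCStarAlgebra I := {}
  letI : NonUnitalCStarAlgebra A := {}
  letI : NonUnitalCStarAlgebra B := {}
  letI : NonUnitalCStarAlgebra J := {}
  letI : NonUnitalCStarAlgebra C := {}
  letI : NonUnitalCStarAlgebra D := {}
  letI : PartialOrder I := nuOrder I
  haveI : StarOrderedRing I := nuStarOrdered I
  intro a ha
  simp only [Set.mem_setOf_eq] at ha
  have hρζ : ρ (ζ a) = 0 := by rw [← hcomm₂, ha, map_zero]
  obtain ⟨j, hj⟩ := (hkerρ (ζ a)).mp hρζ
  set l := CStarAlgebra.approximateUnit I with hl_def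
  have hl := CStarAlgebra.increasingApproximateUnit I
  haveI : l.NeBot := hl.toIsApproximateUnit.neBot
  -- the set of `y : J` on which `η` of the approximate unit acts as a left unit
  let T : Submodule ℂ J :=
    { carrier := {y : J | Filter.Tendsto (fun e : I => η e * y) l (nhds y)}
      add_mem' := fun {y z} hy hz => by simpa [mul_add] using hy.add hz
      zero_mem' := by
        simpa using (tendsto_const_nhds : Filter.Tendsto (fun _ : I => (0 : J)) l _)
      smul_mem' := fun c {y} hy => by simpa [mul_smul_comm] using hy.const_smul c }
  have hS : {y : J | ∃ x : I, ∃ j : J, y = η x * j} ⊆ (T : Set J) := by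
    rintro _ ⟨x, j', rfl⟩
    show Filter.Tendsto (fun e : I => η e * (η x * j')) l (nhds (η x * j'))
    have h1 : Filter.Tendsto (fun e : I => e * x) l (nhds x) := hl.tendsto_mul_right x
    have h2 : Continuous fun z : I => η z * j' := (map_continuous η).mul continuous_const
    refine ((h2.tendsto x).comp h1).congr fun e => ?_
    simp [Function.comp, map_mul, mul_assoc]
  have hT_closed : IsClosed (T : Set J) := by
    refine isClosed_of_closure_subset fun y hy => ?_
    show Filter.Tendsto (fun e : I => η e * y) l (nhds y)
    rw [Metric.tendsto_nhds]
    intro ε hε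
    obtain ⟨y', hy'T, hy'⟩ := Metric.mem_closure_iff.mp hy (ε / 3) (by positivity)
    have h1 : ∀ᶠ e in l, dist (η e * y') y' < ε / 3 :=
      (Metric.tendsto_nhds.mp hy'T) (ε / 3) (by positivity)
    filter_upwards [h1, hl.eventually_norm] with e he hnorm
    have hA : dist (η e * y) (η e * y') ≤ dist y y' := by
      rw [dist_eq_norm, dist_eq_norm, ← mul_sub]
      calc ‖η e * (y - y')‖ ≤ ‖η e‖ * ‖y - y'‖ := norm_mul_le _ _
        _ ≤ 1 * ‖y - y'‖ := by
            gcongr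
            exact le_trans (NonUnitalStarAlgHom.norm_apply_le η e) hnorm
        _ = ‖y - y'‖ := one_mul _
    have h3 : dist y' y < ε / 3 := by rw [dist_comm]; exact hy'
    have h4 : dist (η e * y) (η e * y') < ε / 3 := lt_of_le_of_lt hA hy'
    calc dist (η e * y) y ≤ dist (η e * y) (η e * y') + dist (η e * y') y' + dist y' y :=
          dist_triangle4 _ _ _ _
      _ < ε := by linarith
  have hT_univ : ∀ y : J, y ∈ T := by
    intro y
    have h1 : (Submodule.span ℂ {y : J | ∃ x : I, ∃ j : J, y = η x * j} : Set J) ⊆ T :=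
      Submodule.span_le.mpr hS
    have h2 := closure_minimal h1 hT_closed
    rw [hη_nd] at h2
    exact h2 (Set.mem_univ y)
  have key : Filter.Tendsto (fun e : I => η e * j) l (nhds j) := hT_univ j
  have h4 : Filter.Tendsto (fun e : I => ζ (φ e * a)) l (nhds (ζ a)) := by
    have h5 := ((map_continuous π).tendsto j).comp key
    rw [hj] at h5
    refine h5.congr fun e => ?_
    simp only [Function.comp_apply, map_mul, ← hcomm₁, hj]
  have hζ_isom : Isometry ζ := NonUnitalStarAlgHom.isometry ζ hζ_inj
  have hcau : Cauchy (Filter.map (fun e : I => φ e * a) l) := by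
    have h5 : Cauchy (Filter.map (fun e : I => ζ (φ e * a)) l) := h4.cauchy_map
    rw [show (fun e : I => ζ (φ e * a)) = ζ ∘ (fun e : I => φ e * a) from rfl,
      ← Filter.map_map] at h5
    exact (hζ_isom.isUniformInducing.cauchy_map_iff).mp h5
  obtain ⟨b, hb⟩ := CompleteSpace.complete hcau
  have hgb : Filter.Tendsto (fun e : I => φ e * a) l (nhds b) := hb
  have hbφ : b ∈ Set.range φ :=
    hclosed.mem_of_tendsto hgb (Filter.Eventually.of_forall fun e => (hideal (φ e) ⟨e, rfl⟩ a).1)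
  have hba : ζ b = ζ a :=
    tendsto_nhds_unique ((hζ_isom.continuous.tendsto b).comp hgb) h4
  exact hζ_inj hba ▸ hbφ
end

section
/- (Fell's absorption principle, discrete case) Let G be a discrete group, H a Hilbert space, and V: G → U(H) a unitary representation. Let λ: G → U(ℓ²(G)) be the left regular representation, λ_t(δ_s) = δ_{ts}. Define the unitary U on H ⊗ ℓ²(G) by U(ξ ⊗ δ_s) = V_s ξ ⊗ δ_s. Then U*(V_t ⊗ λ_t)U = 1_H ⊗ λ_t for all t ∈ G; i.e., V ⊗ λ is unitarily equivalent to 1 ⊗ λ. -/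
/-- Fell's absorption principle for a discrete group: if `V` is a unitary
representation of `G` on `H`, `U` is the unitary on `ℓ²(G, H) ≅ H ⊗ ℓ²(G)` given by
`(U f)(s) = Vₛ (f s)` (i.e. `U (ξ ⊗ δₛ) = Vₛ ξ ⊗ δₛ`), `W t` is `V_t ⊗ λ_t` (i.e.
`(W t f)(s) = V_t (f (t⁻¹ s))`) and `L t` is `1 ⊗ λ_t` (i.e. `(L t f)(s) = f (t⁻¹ s)`),
then `U* (V_t ⊗ λ_t) U = 1 ⊗ λ_t` for all `t`. -/
theorem stmt9
    {G : Type*} [Group G]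
    {H : Type*} [NormedAddCommGroup H] [InnerProductSpace ℂ H] [CompleteSpace H]
    (V : G → (H ≃ₗᵢ[ℂ] H))
    (hVmul : ∀ (s t : G) (ξ : H), V (s * t) ξ = V s (V t ξ))
    (hVone : V (1 : G) = LinearIsometryEquiv.refl ℂ H)
    (U : lp (fun _ : G => H) 2 ≃ₗᵢ[ℂ] lp (fun _ : G => H) 2)
    (hU : ∀ (f : lp (fun _ : G => H) 2) (s : G), U f s = V s (f s))
    (W : G → (lp (fun _ : G => H) 2 ≃ₗᵢ[ℂ] lp (fun _ : G => H) 2))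
    (hW : ∀ (t : G) (f : lp (fun _ : G => H) 2) (s : G), W t f s = V t (f (t⁻¹ * s)))
    (L : G → (lp (fun _ : G => H) 2 ≃ₗᵢ[ℂ] lp (fun _ : G => H) 2))
    (hL : ∀ (t : G) (f : lp (fun _ : G => H) 2) (s : G), L t f s = f (t⁻¹ * s)) :
    ∀ (t : G) (f : lp (fun _ : G => H) 2), U.symm (W t (U f)) = L t f := by
  intro t f
  have key : U (L t f) = W t (U f) := by
    apply lp.ext
    funext s
    rw [hU, hL, hW, hU, ← hVmul, mul_inv_cancel_left]
  rw [← key, U.symm_apply_apply]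
end
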